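/- arXiv:2412.00211 — 6 statements merged into one kernel-verified Lean document; each statement's English description precedes it below -/
import Mathlib

section
/- Let ν₁, ρ₁, ν_c, ρ_c ∈ ℝ satisfy ν₁ + ρ_c > 0 and ν_c + ρ₁ > 0. Then there exists a constant K > 0, depending only on ν₁, ρ₁, ν_c, ρ_c, such that for every N ∈ ℕ and all real sequences r, d, e₁, e₂, y₁, y₂ : {0,…,N} → ℝ satisfying the negative-feedback interconnection e₁(t) = r(t) − y₂(t) and e₂(t) = d(t) + y₁(t) for all t ∈ {0,…,N}, together with the dissipation inequalities Σ_{t=0}^{N} (y₁(t)e₁(t) − ρ₁ y₁(t)² − ν₁ e₁(t)²) ≥ 0 and Σ_{t=0}^{N} (y₂(t)e₂(t) − ρ_c y₂(t)² − ν_c e₂(t)²) ≥ 0, one has Σ_{t=0}^{N} (y₁(t)² + y₂(t)²) ≤ K · Σ_{t=0}^{N} (r(t)² + d(t)²). -/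
private lemma young (ε x y : ℝ) (hε : 0 < ε) : x * y ≤ ε * x ^ 2 + y ^ 2 / (4 * ε) := by
  have h4 : (0:ℝ) < 4 * ε := by linarith
  have h : x * y - ε * x ^ 2 ≤ y ^ 2 / (4 * ε) := by
    rw [le_div_iff₀ h4]
    nlinarith [sq_nonneg (2 * ε * x - y)]
  linarith

private lemma ptwise (ν₁ ρ₁ νc ρc a b C : ℝ) (ha : a = νc + ρ₁) (hb : b = ν₁ + ρc)
    (ha0 : 0 < a) (hb0 : 0 < b)
    (hC : C = 1/a + 4*νc^2/a + |νc| + 1/b + 4*ν₁^2/b + |ν₁|)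
    (r d y₁ y₂ : ℝ) :
    (y₁ * (r - y₂) - ρ₁ * y₁ ^ 2 - ν₁ * (r - y₂) ^ 2) +
    (y₂ * (d + y₁) - ρc * y₂ ^ 2 - νc * (d + y₁) ^ 2) +
    (a/2) * y₁ ^ 2 + (b/2) * y₂ ^ 2 ≤ C * (r ^ 2 + d ^ 2) := by
  have hy1 : y₁ * r ≤ (a/4) * y₁ ^ 2 + r ^ 2 / (4 * (a/4)) := young (a/4) y₁ r (by linarith)
  have hy2 : y₂ * d ≤ (b/4) * y₂ ^ 2 + d ^ 2 / (4 * (b/4)) := young (b/4) y₂ d (by linarith)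
  have hy3 : y₂ * (2 * ν₁ * r) ≤ (b/4) * y₂ ^ 2 + (2 * ν₁ * r) ^ 2 / (4 * (b/4)) :=
    young (b/4) y₂ (2 * ν₁ * r) (by linarith)
  have hy4 : y₁ * (-(2 * νc * d)) ≤ (a/4) * y₁ ^ 2 + (-(2 * νc * d)) ^ 2 / (4 * (a/4)) :=
    young (a/4) y₁ (-(2 * νc * d)) (by linarith)
  have e1 : r ^ 2 / (4 * (a/4)) = (1/a) * r ^ 2 := by field_simp
  have e2 : d ^ 2 / (4 * (b/4)) = (1/b) * d ^ 2 := by field_simp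
  have e3 : (2 * ν₁ * r) ^ 2 / (4 * (b/4)) = (4*ν₁^2/b) * r ^ 2 := by field_simp; ring
  have e4 : (-(2 * νc * d)) ^ 2 / (4 * (a/4)) = (4*νc^2/a) * d ^ 2 := by field_simp; ring
  rw [e1] at hy1; rw [e2] at hy2; rw [e3] at hy3; rw [e4] at hy4
  subst ha hb hC
  have habs1 : -ν₁ * r ^ 2 ≤ |ν₁| * r ^ 2 := by
    have := neg_abs_le ν₁
    nlinarith [sq_nonneg r]
  have habs2 : -νc * d ^ 2 ≤ |νc| * d ^ 2 := by
    have := neg_abs_le νc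
    nlinarith [sq_nonneg d]
  have p1 : 0 ≤ (4*νc^2/(νc + ρ₁)) * r ^ 2 := by positivity
  have p2 : 0 ≤ |νc| * r ^ 2 := by positivity
  have p3 : 0 ≤ (1/(ν₁ + ρc)) * r ^ 2 := by positivity
  have p4 : 0 ≤ (4*ν₁^2/(ν₁ + ρc)) * d ^ 2 := by positivity
  have p5 : 0 ≤ |ν₁| * d ^ 2 := by positivity
  have p6 : 0 ≤ (1/(νc + ρ₁)) * d ^ 2 := by positivity
  linarith [hy1, hy2, hy3, hy4, habs1, habs2, p1, p2, p3, p4, p5, p6]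

/-- Passivity theorem (signal level): two dissipative systems in negative
feedback have finite ℓ₂ gain from exogenous inputs `(r, d)` to the outputs
`(y₁, y₂)` whenever `ν₁ + ρc > 0` and `νc + ρ₁ > 0`. -/
theorem stmt0 (ν₁ ρ₁ νc ρc : ℝ) (h1 : ν₁ + ρc > 0) (h2 : νc + ρ₁ > 0) :
    ∃ K > (0 : ℝ), ∀ (N : ℕ) (r d e₁ e₂ y₁ y₂ : ℕ → ℝ),
      (∀ t ≤ N, e₁ t = r t - y₂ t) →
      (∀ t ≤ N, e₂ t = d t + y₁ t) →
      0 ≤ ∑ t ∈ Finset.range (N + 1),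
        (y₁ t * e₁ t - ρ₁ * (y₁ t) ^ 2 - ν₁ * (e₁ t) ^ 2) →
      0 ≤ ∑ t ∈ Finset.range (N + 1),
        (y₂ t * e₂ t - ρc * (y₂ t) ^ 2 - νc * (e₂ t) ^ 2) →
      ∑ t ∈ Finset.range (N + 1), ((y₁ t) ^ 2 + (y₂ t) ^ 2) ≤
        K * ∑ t ∈ Finset.range (N + 1), ((r t) ^ 2 + (d t) ^ 2) := by
  set a := νc + ρ₁ with ha
  set b := ν₁ + ρc with hb
  have ha0 : 0 < a := h2
  have hb0 : 0 < b := h1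
  set C : ℝ := 1/a + 4*νc^2/a + |νc| + 1/b + 4*ν₁^2/b + |ν₁| with hC
  have hC0 : 0 < C := by
    have : 0 < 1/a := by positivity
    have : 0 ≤ 4*νc^2/a := by positivity
    have : 0 < 1/b := by positivity
    have : 0 ≤ 4*ν₁^2/b := by positivity
    have := abs_nonneg νc
    have := abs_nonneg ν₁
    positivity
  set m : ℝ := min a b with hm
  have hm0 : 0 < m := lt_min ha0 hb0
  refine ⟨2 * C / m, by positivity, ?_⟩
  intro N r d e₁ e₂ y₁ y₂ he₁ he₂ hS1 hS2
  have hS1' : 0 ≤ ∑ t ∈ Finset.range (N + 1),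
      (y₁ t * (r t - y₂ t) - ρ₁ * (y₁ t) ^ 2 - ν₁ * (r t - y₂ t) ^ 2) := by
    refine hS1.trans_eq (Finset.sum_congr rfl fun t ht => ?_)
    rw [he₁ t (Finset.mem_range_succ_iff.mp ht)]
  have hS2' : 0 ≤ ∑ t ∈ Finset.range (N + 1),
      (y₂ t * (d t + y₁ t) - ρc * (y₂ t) ^ 2 - νc * (d t + y₁ t) ^ 2) := by
    refine hS2.trans_eq (Finset.sum_congr rfl fun t ht => ?_)
    rw [he₂ t (Finset.mem_range_succ_iff.mp ht)]
  have hpt : ∀ t ∈ Finset.range (N + 1),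
      (y₁ t * (r t - y₂ t) - ρ₁ * (y₁ t) ^ 2 - ν₁ * (r t - y₂ t) ^ 2) +
      (y₂ t * (d t + y₁ t) - ρc * (y₂ t) ^ 2 - νc * (d t + y₁ t) ^ 2) +
      (a/2) * (y₁ t) ^ 2 + (b/2) * (y₂ t) ^ 2 ≤ C * ((r t) ^ 2 + (d t) ^ 2) :=
    fun t _ => ptwise ν₁ ρ₁ νc ρc a b C ha hb ha0 hb0 hC (r t) (d t) (y₁ t) (y₂ t)
  have hsum := Finset.sum_le_sum hpt
  rw [show (∑ t ∈ Finset.range (N + 1),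
      ((y₁ t * (r t - y₂ t) - ρ₁ * (y₁ t) ^ 2 - ν₁ * (r t - y₂ t) ^ 2) +
      (y₂ t * (d t + y₁ t) - ρc * (y₂ t) ^ 2 - νc * (d t + y₁ t) ^ 2) +
      (a/2) * (y₁ t) ^ 2 + (b/2) * (y₂ t) ^ 2)) =
      (∑ t ∈ Finset.range (N + 1),
        (y₁ t * (r t - y₂ t) - ρ₁ * (y₁ t) ^ 2 - ν₁ * (r t - y₂ t) ^ 2)) +
      (∑ t ∈ Finset.range (N + 1),
        (y₂ t * (d t + y₁ t) - ρc * (y₂ t) ^ 2 - νc * (d t + y₁ t) ^ 2)) +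
      (∑ t ∈ Finset.range (N + 1), ((a/2) * (y₁ t) ^ 2 + (b/2) * (y₂ t) ^ 2))
    from by rw [← Finset.sum_add_distrib, ← Finset.sum_add_distrib]; exact Finset.sum_congr rfl fun t _ => by ring] at hsum
  have hkey : ∑ t ∈ Finset.range (N + 1), ((a/2) * (y₁ t) ^ 2 + (b/2) * (y₂ t) ^ 2) ≤
      C * ∑ t ∈ Finset.range (N + 1), ((r t) ^ 2 + (d t) ^ 2) := by
    rw [Finset.mul_sum]; linarith
  have hmono : (m/2) * ∑ t ∈ Finset.range (N + 1), ((y₁ t) ^ 2 + (y₂ t) ^ 2) ≤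
      ∑ t ∈ Finset.range (N + 1), ((a/2) * (y₁ t) ^ 2 + (b/2) * (y₂ t) ^ 2) := by
    rw [Finset.mul_sum]
    refine Finset.sum_le_sum fun t _ => ?_
    have h1 : m ≤ a := min_le_left a b
    have h2 : m ≤ b := min_le_right a b
    nlinarith [sq_nonneg (y₁ t), sq_nonneg (y₂ t)]
  have hfin : (m/2) * ∑ t ∈ Finset.range (N + 1), ((y₁ t) ^ 2 + (y₂ t) ^ 2) ≤
      C * ∑ t ∈ Finset.range (N + 1), ((r t) ^ 2 + (d t) ^ 2) := hmono.trans hkey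
  calc ∑ t ∈ Finset.range (N + 1), ((y₁ t) ^ 2 + (y₂ t) ^ 2)
      = (2/m) * ((m/2) * ∑ t ∈ Finset.range (N + 1), ((y₁ t) ^ 2 + (y₂ t) ^ 2)) := by
        field_simp
    _ ≤ (2/m) * (C * ∑ t ∈ Finset.range (N + 1), ((r t) ^ 2 + (d t) ^ 2)) :=
        mul_le_mul_of_nonneg_left hfin (by positivity)
    _ = 2 * C / m * ∑ t ∈ Finset.range (N + 1), ((r t) ^ 2 + (d t) ^ 2) := by ring
end

section
/- Let n ∈ ℕ, A ∈ ℝ^{n×n}, B ∈ ℝⁿ, c ∈ ℝⁿ, D ∈ ℝ, and scalars Q, S, R ∈ ℝ. Let X ∈ ℝ^{n×n} be symmetric positive semidefinite, and suppose the symmetric (n+1)×(n+1) block matrix with blocks [AᵀXA − X − Q c cᵀ] (top-left, n×n), [AᵀXB − Q D c − S c] (top-right, n×1), and [BᵀXB − Q D² − 2 S D − R] (bottom-right, scalar) is negative semidefinite. Then for every input sequence u : ℕ → ℝ and the trajectory defined by x(0) = 0, x(t+1) = A x(t) + B u(t), y(t) = cᵀ x(t) + D u(t), one has Σ_{t=0}^{t_f}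 (Q y(t)² + 2 S y(t) u(t) + R u(t)²) ≥ 0 for every t_f ∈ ℕ. -/
/-!
With the storage function `V x = xᵀ X x`, the quadratic form of the KYP matrix at `(x, u)` is
`V (A x + B u) - V x - s (y, u)`. Negative semidefiniteness therefore bounds the growth of `V`
along a trajectory by the supply rate at each step, and summing from `x 0 = 0` gives
`0 ≤ V (x (t_f + 1)) ≤ ∑ s`.
-/

open Matrix Finset

theorem sum_range_nonneg_of_le_add {α : Type*} [AddCommGroup α] [PartialOrder α]
    [IsOrderedAddMonoid α] {V s : ℕ → α} {N : ℕ} (h0 : V 0 = 0) (hN : 0 ≤ V N)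
    (hstep : ∀ t, V (t + 1) ≤ V t + s t) : 0 ≤ ∑ t ∈ range N, s t :=
  calc 0 ≤ V N - V 0 := by rwa [h0, sub_zero]
    _ = ∑ t ∈ range N, (V (t + 1) - V t) := (sum_range_sub V N).symm
    _ ≤ ∑ t ∈ range N, s t := sum_le_sum fun t _ => sub_le_iff_le_add'.mpr (hstep t)

def kypMatrix {n : ℕ} (A X : Matrix (Fin n) (Fin n) ℝ) (B c : Fin n → ℝ) (D Q S R : ℝ) :
    Matrix (Fin n ⊕ Fin 1) (Fin n ⊕ Fin 1) ℝ :=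
  fromBlocks
    (Aᵀ * X * A - X - Q • vecMulVec c c)
    (of fun i (_ : Fin 1) => Aᵀ.mulVec (X.mulVec B) i - Q * D * c i - S * c i)
    (of fun (_ : Fin 1) j => Aᵀ.mulVec (X.mulVec B) j - Q * D * c j - S * c j)
    (of fun (_ _ : Fin 1) => B ⬝ᵥ X.mulVec B - Q * D ^ 2 - 2 * S * D - R)

def supplyRate (Q S R y u : ℝ) : ℝ := Q * y ^ 2 + 2 * S * y * u + R * u ^ 2

theorem kypMatrix_quadForm {n : ℕ} {A X : Matrix (Fin n) (Fin n) ℝ} {B c : Fin n → ℝ}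
    {D Q S R : ℝ} (hX : X.IsSymm) (a : Fin n → ℝ) (v : ℝ) :
    Sum.elim a (fun _ => v) ⬝ᵥ kypMatrix A X B c D Q S R *ᵥ Sum.elim a (fun _ => v) =
      (A *ᵥ a + v • B) ⬝ᵥ X *ᵥ (A *ᵥ a + v • B) - a ⬝ᵥ X *ᵥ a -
        supplyRate Q S R (c ⬝ᵥ a + D * v) v := by
  set w := Aᵀ *ᵥ X *ᵥ B - (Q * D) • c - S • c
  have hcol : (of fun i (_ : Fin 1) => Aᵀ.mulVec (X.mulVec B) i - Q * D * c i - S * c i)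
      = replicateCol (Fin 1) w := by ext; simp [w]
  have hrow : (of fun (_ : Fin 1) j => Aᵀ.mulVec (X.mulVec B) j - Q * D * c j - S * c j)
      = replicateRow (Fin 1) w := by ext; simp [w]
  have hsymm : B ⬝ᵥ X *ᵥ (A *ᵥ a) = A *ᵥ a ⬝ᵥ X *ᵥ B := by
    rw [← dotProduct_transpose_mulVec, hX]
  have hcolv : a ⬝ᵥ replicateCol (Fin 1) w *ᵥ (fun _ => v) = v * (a ⬝ᵥ w) := by
    simp [dotProduct, mulVec, replicateCol, mul_sum, mul_comm, mul_left_comm]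
  have hrowv : (fun _ => v) ⬝ᵥ replicateRow (Fin 1) w *ᵥ a = v * (a ⬝ᵥ w) := by
    rw [replicateRow_mulVec_eq_const, dotProduct_comm w]
    simp [dotProduct]
  have hw : a ⬝ᵥ w = A *ᵥ a ⬝ᵥ X *ᵥ B - Q * D * (c ⬝ᵥ a) - S * (c ⬝ᵥ a) := by
    rw [dotProduct_sub, dotProduct_sub, dotProduct_smul, dotProduct_smul, smul_eq_mul,
      smul_eq_mul, dotProduct_transpose_mulVec, dotProduct_comm _ (A *ᵥ a), dotProduct_comm a c]
  have hcorner :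
      (fun _ => v) ⬝ᵥ (of fun (_ _ : Fin 1) => B ⬝ᵥ X *ᵥ B - Q * D ^ 2 - 2 * S * D - R) *ᵥ
        (fun _ => v) = v * (B ⬝ᵥ X *ᵥ B - Q * D ^ 2 - 2 * S * D - R) * v := by
    simp only [dotProduct, mulVec, of_apply, Fin.sum_univ_one]
    ring
  rw [kypMatrix, hcol, hrow, fromBlocks_mulVec, sumElim_dotProduct_sumElim]
  simp only [Sum.elim_comp_inl, Sum.elim_comp_inr, dotProduct_add, sub_mulVec, smul_mulVec,
    dotProduct_sub, hcolv, hrowv, hcorner, ← mulVec_mulVec, dotProduct_transpose_mulVec,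
    vecMulVec_mulVec]
  rw [dotProduct_comm (X *ᵥ A *ᵥ a), op_smul_eq_smul, dotProduct_smul, dotProduct_smul,
    dotProduct_comm a c, hw, mulVec_add, mulVec_smul, dotProduct_add, add_dotProduct,
    add_dotProduct, dotProduct_smul, smul_dotProduct, smul_dotProduct, dotProduct_smul, hsymm]
  simp only [smul_eq_mul, supplyRate]
  ring

theorem storage_le_add_supplyRate {n : ℕ} {A X : Matrix (Fin n) (Fin n) ℝ} {B c : Fin n → ℝ}
    {D Q S R : ℝ} (hX : X.IsSymm) (hM : (-kypMatrix A X B c D Q S R).PosSemidef)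
    (a : Fin n → ℝ) (v : ℝ) :
    (A *ᵥ a + v • B) ⬝ᵥ X *ᵥ (A *ᵥ a + v • B) ≤
      a ⬝ᵥ X *ᵥ a + supplyRate Q S R (c ⬝ᵥ a + D * v) v := by
  have h := hM.dotProduct_mulVec_nonneg (Sum.elim a fun _ => v)
  rw [star_trivial, neg_mulVec, dotProduct_neg, kypMatrix_quadForm hX] at h
  linarith

/-- Sufficiency direction of the discrete-time KYP lemma: if the KYP block
matrix is negative semidefinite (for some symmetric PSD `X`), then every
trajectory from zero initial state satisfies the dissipation inequality for the
supply rate `Q y² + 2 S y u + R u²` at every horizon. -/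
theorem stmt5 (n : ℕ) (A X : Matrix (Fin n) (Fin n) ℝ) (B c : Fin n → ℝ)
    (D Q S R : ℝ) (hX : X.PosSemidef)
    (hM : (-(Matrix.fromBlocks
        (Aᵀ * X * A - X - Q • Matrix.vecMulVec c c)
        (Matrix.of fun i (_ : Fin 1) =>
          Aᵀ.mulVec (X.mulVec B) i - Q * D * c i - S * c i)
        (Matrix.of fun (_ : Fin 1) j =>
          Aᵀ.mulVec (X.mulVec B) j - Q * D * c j - S * c j)
        (Matrix.of fun (_ _ : Fin 1) =>
          B ⬝ᵥ X.mulVec B - Q * D ^ 2 - 2 * S * D - R))).PosSemidef) :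
    ∀ (u : ℕ → ℝ) (x : ℕ → Fin n → ℝ) (y : ℕ → ℝ),
      x 0 = 0 →
      (∀ t, x (t + 1) = A.mulVec (x t) + u t • B) →
      (∀ t, y t = c ⬝ᵥ x t + D * u t) →
      ∀ tf : ℕ,
        0 ≤ ∑ t ∈ Finset.range (tf + 1),
          (Q * (y t) ^ 2 + 2 * S * y t * u t + R * (u t) ^ 2) := by
  intro u x y hx0 hxs hys tf
  refine sum_range_nonneg_of_le_add (V := fun t => x t ⬝ᵥ X *ᵥ x t) (by simp [hx0])
    (hX.dotProduct_mulVec_nonneg _) fun t => ?_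
  rw [hxs, hys]
  exact storage_le_add_supplyRate (isHermitian_iff_isSymm.mp hX.isHermitian) hM (x t) (u t)
end

section
/- Let n ∈ ℕ, A ∈ ℝ^{n×n}, B ∈ ℝⁿ, c ∈ ℝⁿ, D ∈ ℝ, and let ρ₁ ∈ ℝ, ε₂ > 0. Suppose there exists a symmetric positive-definite X ∈ ℝ^{n×n} such that the symmetric (n+1)×(n+1) block matrix with entries (1,1) = AᵀXA − X, (1,2) = AᵀXB − c/2, (2,2) = BᵀXB − D + (ε₂ − ρ₁) is negative definite. Then for every input u : ℕ → ℝ and the trajectory with x(0) = 0, x(t+1) = A x(t) + B u(t), y(t) = cᵀ x(t) + D u(t), one has Σ_{t=0}^{t_f} ( y(t) u(t) + (ρ₁ − ε₂) u(t)² ) ≥ 0 for every t_f ∈ ℕ; that is, the system is input-feedforward passive with ν_c = −ρ₁ + ε₂ (and ρ_c = 0). -/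
/-!
The storage function is `V x = xᵀ X x`. Along a trajectory, the quadratic form of the LMI matrix at
`(x t, u t)` equals `V (x (t+1)) - V (x t)` minus the supply rate `y t * u t + (ρ₁ - ε₂) * u t ^ 2`,
so negative definiteness gives the dissipation inequality `V (x (t+1)) - V (x t) ≤ supply`.
Summing telescopes to `V (x (tf+1)) - V (x 0) ≤ ∑ supply`, whose left side is `≥ 0` since
`X` is positive definite and `x 0 = 0`.
-/

open Matrix

section QuadraticForms

variable {ι R : Type*} [Fintype ι] [CommRing R]

lemma sumElim_dotProduct_fromBlocks_mulVec_sumElim (P : Matrix ι ι R) (q : ι → R) (r v : R)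
    (w : ι → R) :
    Sum.elim w (fun _ : Fin 1 => v) ⬝ᵥ
        fromBlocks P (of fun i (_ : Fin 1) => q i) (of fun (_ : Fin 1) j => q j)
          (of fun (_ _ : Fin 1) => r) *ᵥ Sum.elim w (fun _ => v) =
      w ⬝ᵥ P *ᵥ w + 2 * v * (q ⬝ᵥ w) + r * v ^ 2 := by
  have h12 : (of fun i (_ : Fin 1) => q i) *ᵥ (fun _ => v) = v • q := by
    ext i; simp [mulVec, dotProduct, mul_comm]
  have h21 : (of fun (_ : Fin 1) j => q j) *ᵥ w = fun _ => q ⬝ᵥ w := rfl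
  have h22 : (of fun (_ _ : Fin 1) => r) *ᵥ (fun _ => v) = fun _ => r * v := by
    ext i; simp [mulVec, dotProduct]
  rw [fromBlocks_mulVec, sumElim_dotProduct_sumElim, Sum.elim_comp_inl, Sum.elim_comp_inr, h12,
    h21, h22, dotProduct_add, dotProduct_smul, dotProduct_comm w q, smul_eq_mul]
  simp only [dotProduct, Pi.add_apply, Finset.univ_unique, Finset.sum_singleton]
  ring

lemma dotProduct_mulVec_add_smul {X : Matrix ι ι R} (hX : X.IsSymm) (A : Matrix ι ι R)
    (B w : ι → R) (v : R) :
    (A *ᵥ w + v • B) ⬝ᵥ X *ᵥ (A *ᵥ w + v • B) =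
      w ⬝ᵥ (Aᵀ * X * A) *ᵥ w + 2 * v * ((Aᵀ *ᵥ (X *ᵥ B)) ⬝ᵥ w) + (B ⬝ᵥ X *ᵥ B) * v ^ 2 := by
  have hAA : (A *ᵥ w) ⬝ᵥ X *ᵥ (A *ᵥ w) = w ⬝ᵥ (Aᵀ * X * A) *ᵥ w := by
    rw [← mulVec_mulVec, ← mulVec_mulVec, dotProduct_mulVec w, vecMul_transpose]
  have hAB : (A *ᵥ w) ⬝ᵥ X *ᵥ B = (Aᵀ *ᵥ (X *ᵥ B)) ⬝ᵥ w := by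
    rw [mulVec_transpose, ← dotProduct_mulVec, dotProduct_comm]
  have hBA : B ⬝ᵥ X *ᵥ (A *ᵥ w) = (A *ᵥ w) ⬝ᵥ X *ᵥ B := by
    rw [dotProduct_mulVec, ← mulVec_transpose, hX.eq, dotProduct_comm]
  rw [mulVec_add, mulVec_smul, dotProduct_add, add_dotProduct, add_dotProduct, dotProduct_smul,
    smul_dotProduct, smul_dotProduct, dotProduct_smul, hAA, hBA, hAB]
  ring

end QuadraticForms

lemma sum_range_nonneg_of_storage_function {α : Type*} [AddCommGroup α] [PartialOrder α]
    [IsOrderedAddMonoid α] {V s : ℕ → α} (hV₀ : V 0 = 0) (hV : ∀ t, 0 ≤ V t)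
    (hstep : ∀ t, V (t + 1) - V t ≤ s t) (N : ℕ) :
    0 ≤ ∑ t ∈ Finset.range N, s t :=
  calc 0 ≤ V N := hV N
    _ = ∑ t ∈ Finset.range N, (V (t + 1) - V t) := by rw [Finset.sum_range_sub, hV₀, sub_zero]
    _ ≤ ∑ t ∈ Finset.range N, s t := Finset.sum_le_sum fun t _ => hstep t

lemma storage_increment_le_supply {ι : Type*} [Fintype ι] {A X : Matrix ι ι ℝ} {B c : ι → ℝ}
    {D ν : ℝ} (hX : X.IsSymm)
    (hLMI : (-(fromBlocks (Aᵀ * X * A - X) (of fun i (_ : Fin 1) => (Aᵀ *ᵥ (X *ᵥ B) - c / 2) i)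
      (of fun (_ : Fin 1) j => (Aᵀ *ᵥ (X *ᵥ B) - c / 2) j)
      (of fun (_ _ : Fin 1) => B ⬝ᵥ X *ᵥ B - D + ν))).PosSemidef) (w : ι → ℝ) (v : ℝ) :
    (A *ᵥ w + v • B) ⬝ᵥ X *ᵥ (A *ᵥ w + v • B) - w ⬝ᵥ X *ᵥ w ≤
      (c ⬝ᵥ w + D * v) * v - ν * v ^ 2 := by
  have hq := hLMI.dotProduct_mulVec_nonneg (Sum.elim w fun _ => v)
  have hc : (c / 2) ⬝ᵥ w = c ⬝ᵥ w / 2 := by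
    simp only [dotProduct, Pi.div_apply, Pi.ofNat_apply, Finset.sum_div, div_mul_eq_mul_div]
  rw [star_trivial, neg_mulVec, dotProduct_neg, sumElim_dotProduct_fromBlocks_mulVec_sumElim,
    sub_mulVec, dotProduct_sub, sub_dotProduct, hc] at hq
  rw [dotProduct_mulVec_add_smul hX]
  linarith

theorem stmt7_general (n : ℕ) (A : Matrix (Fin n) (Fin n) ℝ) (B c : Fin n → ℝ)
    (D ρ₁ ε₂ : ℝ)
    (hX : ∃ X : Matrix (Fin n) (Fin n) ℝ, X.PosDef ∧
      (-(Matrix.fromBlocks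
        (Aᵀ * X * A - X)
        (Matrix.of fun i (_ : Fin 1) => Aᵀ.mulVec (X.mulVec B) i - c i / 2)
        (Matrix.of fun (_ : Fin 1) j => Aᵀ.mulVec (X.mulVec B) j - c j / 2)
        (Matrix.of fun (_ _ : Fin 1) => B ⬝ᵥ X.mulVec B - D + (ε₂ - ρ₁)))).PosDef) :
    ∀ (u : ℕ → ℝ) (x : ℕ → Fin n → ℝ) (y : ℕ → ℝ),
      x 0 = 0 →
      (∀ t, x (t + 1) = A.mulVec (x t) + u t • B) →
      (∀ t, y t = c ⬝ᵥ x t + D * u t) →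
      ∀ tf : ℕ,
        0 ≤ ∑ t ∈ Finset.range (tf + 1),
          (y t * u t + (ρ₁ - ε₂) * (u t) ^ 2) := by
  obtain ⟨X, hXpos, hLMI⟩ := hX
  intro u x y hx₀ hx hy tf
  have hXsymm : X.IsSymm := isHermitian_iff_isSymm.mp hXpos.isHermitian
  refine sum_range_nonneg_of_storage_function (V := fun t => x t ⬝ᵥ X *ᵥ x t)
    (by simp [hx₀]) (fun t => ?_) (fun t => ?_) (tf + 1)
  · simpa using hXpos.posSemidef.dotProduct_mulVec_nonneg (x t)
  · have := storage_increment_le_supply hXsymm hLMI.posSemidef (x t) (u t)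
    rw [hx, hy]
    linarith

/-- Case B of Theorem 2: the KYP-type LMI certifies that the state-space
system `(A, B, cᵀ, D)` is input-feedforward passive with `νc = −ρ₁ + ε₂`
(and `ρc = 0`). -/
theorem stmt7 (n : ℕ) (A : Matrix (Fin n) (Fin n) ℝ) (B c : Fin n → ℝ)
    (D ρ₁ ε₂ : ℝ) (hε₂ : 0 < ε₂)
    (hX : ∃ X : Matrix (Fin n) (Fin n) ℝ, X.PosDef ∧
      (-(Matrix.fromBlocks
        (Aᵀ * X * A - X)
        (Matrix.of fun i (_ : Fin 1) => Aᵀ.mulVec (X.mulVec B) i - c i / 2)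
        (Matrix.of fun (_ : Fin 1) j => Aᵀ.mulVec (X.mulVec B) j - c j / 2)
        (Matrix.of fun (_ _ : Fin 1) => B ⬝ᵥ X.mulVec B - D + (ε₂ - ρ₁)))).PosDef) :
    ∀ (u : ℕ → ℝ) (x : ℕ → Fin n → ℝ) (y : ℕ → ℝ),
      x 0 = 0 →
      (∀ t, x (t + 1) = A.mulVec (x t) + u t • B) →
      (∀ t, y t = c ⬝ᵥ x t + D * u t) →
      ∀ tf : ℕ,
        0 ≤ ∑ t ∈ Finset.range (tf + 1),
          (y t * u t + (ρ₁ - ε₂) * (u t) ^ 2) :=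
  stmt7_general n A B c D ρ₁ ε₂ hX
end

section
/- Let m ≥ 1, let M ≥ 2 be an integer, let h₀ > 0 and 0 < h ≤ 1, and let g : {0,…,m−1} → ℝ satisfy |g(t)| ≤ h₀ hᵗ for all t. Define f_r(θ) = Σ_{t=0}^{m−1} g(t) cos(tθ) and ε = π h₀ · (Σ_{t=0}^{m−1} hᵗ) · (m−1)/(2M). Then for every θ ∈ [0, π] there exists an integer m' ∈ {0,…,M} such that |θ − m'π/M| ≤ π/(2M) and |f_r(θ) − f_r(m'π/M)| ≤ ε. -/
/-!
Round `θ M / π` to the nearest integer `m'`, so that `|θ - m'π/M| ≤ π/(2M)`. Since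
`θ ↦ cos (t θ)` is `t`-Lipschitz, each term of `f_r` moves by at most
`|g t| · t · π/(2M) ≤ h₀ hᵗ (m - 1) π/(2M)`; summing over `t < m` gives `ε`.
-/

open Finset Real

lemma exists_nat_le_abs_sub_le_half {x : ℝ} {M : ℕ} (hx₀ : 0 ≤ x) (hxM : x ≤ M) :
    ∃ n : ℕ, n ≤ M ∧ |x - n| ≤ 1 / 2 := by
  have hlo : (⌊x + 1 / 2⌋₊ : ℝ) ≤ x + 1 / 2 := Nat.floor_le (by linarith)
  have hhi : x + 1 / 2 < ⌊x + 1 / 2⌋₊ + 1 := Nat.lt_floor_add_one _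
  refine ⟨⌊x + 1 / 2⌋₊, ?_, abs_le.2 ⟨by linarith, by linarith⟩⟩
  have : (⌊x + 1 / 2⌋₊ : ℝ) < M + 1 := by linarith
  exact_mod_cast Nat.lt_add_one_iff.mp (by exact_mod_cast this)

lemma exists_sample_abs_sub_le {θ : ℝ} (hθ : θ ∈ Set.Icc 0 π) {M : ℕ} (hM : 0 < M) :
    ∃ n : ℕ, n ≤ M ∧ |θ - n * π / M| ≤ π / (2 * M) := by
  have hM' : (0 : ℝ) < M := by exact_mod_cast hM
  obtain ⟨n, hnM, hn⟩ : ∃ n : ℕ, n ≤ M ∧ |θ * M / π - n| ≤ 1 / 2 :=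
    exists_nat_le_abs_sub_le_half (by have := hθ.1; positivity)
      (by rw [div_le_iff₀ pi_pos]; nlinarith [hθ.2])
  refine ⟨n, hnM, ?_⟩
  have hscale : θ - n * π / M = (θ * M / π - n) * (π / M) := by field_simp
  calc |θ - n * π / M| = |θ * M / π - n| * (π / M) := by
        rw [hscale, abs_mul, abs_of_pos (div_pos pi_pos hM')]
    _ ≤ 1 / 2 * (π / M) := by gcongr
    _ = π / (2 * M) := by ring

lemma abs_sum_mul_cos_sub_sum_mul_cos_le (s : Finset ℕ) (g : ℕ → ℝ) (θ φ : ℝ) :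
    |∑ t ∈ s, g t * cos (t * θ) - ∑ t ∈ s, g t * cos (t * φ)| ≤
      (∑ t ∈ s, |g t| * t) * |θ - φ| := by
  rw [← sum_sub_distrib, sum_mul]
  refine (abs_sum_le_sum_abs _ _).trans (sum_le_sum fun t _ => ?_)
  calc |g t * cos (t * θ) - g t * cos (t * φ)|
      = |g t| * |cos (t * θ) - cos (t * φ)| := by rw [← mul_sub, abs_mul]
    _ ≤ |g t| * |t * θ - t * φ| :=
        mul_le_mul_of_nonneg_left (abs_cos_sub_cos_le _ _) (abs_nonneg _)
    _ = |g t| * t * |θ - φ| := by rw [← mul_sub, abs_mul, Nat.abs_cast, mul_assoc]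

lemma sum_range_abs_mul_le {m : ℕ} {g c : ℕ → ℝ} (hg : ∀ t < m, |g t| ≤ c t) :
    ∑ t ∈ range m, |g t| * t ≤ (∑ t ∈ range m, c t) * ((m : ℝ) - 1) := by
  rw [sum_mul]
  refine sum_le_sum fun t ht => ?_
  have ht := mem_range.1 ht
  have htm : (t : ℝ) ≤ m - 1 := by
    have : ((t + 1 : ℕ) : ℝ) ≤ m := by exact_mod_cast ht
    push_cast at this; linarith
  exact mul_le_mul (hg t ht) htm t.cast_nonneg ((abs_nonneg _).trans (hg t ht))

theorem stmt12_general (m M : ℕ) (hM : 2 ≤ M) (h₀ h : ℝ)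
    (g : ℕ → ℝ) (hg : ∀ t < m, |g t| ≤ h₀ * h ^ t)
    (θ : ℝ) (hθ : θ ∈ Set.Icc 0 Real.pi) :
    ∃ m' : ℕ, m' ≤ M ∧ |θ - (m' : ℝ) * Real.pi / M| ≤ Real.pi / (2 * M) ∧
      |(∑ t ∈ Finset.range m, g t * Real.cos (t * θ)) -
        ∑ t ∈ Finset.range m, g t * Real.cos (t * ((m' : ℝ) * Real.pi / M))| ≤
      Real.pi * h₀ * (∑ t ∈ Finset.range m, h ^ t) * ((m : ℝ) - 1) / (2 * M) := by
  obtain ⟨n, hnM, hclose⟩ := exists_sample_abs_sub_le hθ (by omega : 0 < M)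
  refine ⟨n, hnM, hclose, ?_⟩
  have hcoef := sum_range_abs_mul_le hg
  rw [← mul_sum] at hcoef
  calc _ ≤ (∑ t ∈ range m, |g t| * t) * |θ - n * π / M| :=
        abs_sum_mul_cos_sub_sum_mul_cos_le _ _ _ _
    _ ≤ h₀ * (∑ t ∈ range m, h ^ t) * ((m : ℝ) - 1) * (π / (2 * M)) := by
        gcongr
        exact (sum_nonneg fun t _ => by positivity).trans hcoef
    _ = _ := by ring

/-- Sampling lemma for `f_r`: under the decay constraint `|g(t)| ≤ h₀ hᵗ`,
every `θ ∈ [0, π]` is within `π/(2M)` of a sample frequency `m'π/M`, and the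
value of `f_r` there deviates from `f_r(θ)` by at most
`ε = π h₀ (∑ hᵗ)(m−1)/(2M)`. -/
theorem stmt12 (m M : ℕ) (hm : 1 ≤ m) (hM : 2 ≤ M) (h₀ h : ℝ)
    (hh₀ : 0 < h₀) (hh : 0 < h) (hh1 : h ≤ 1)
    (g : ℕ → ℝ) (hg : ∀ t < m, |g t| ≤ h₀ * h ^ t)
    (θ : ℝ) (hθ : θ ∈ Set.Icc 0 Real.pi) :
    ∃ m' : ℕ, m' ≤ M ∧ |θ - (m' : ℝ) * Real.pi / M| ≤ Real.pi / (2 * M) ∧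
      |(∑ t ∈ Finset.range m, g t * Real.cos (t * θ)) -
        ∑ t ∈ Finset.range m, g t * Real.cos (t * ((m' : ℝ) * Real.pi / M))| ≤
      Real.pi * h₀ * (∑ t ∈ Finset.range m, h ^ t) * ((m : ℝ) - 1) / (2 * M) :=
  stmt12_general m M hM h₀ h g hg θ hθ
end

section
/- Let m ≥ 1, g : {0,…,m−1} → ℝ, and ρ, ν ∈ ℝ. Suppose that for every θ ∈ ℝ the complex number C(e^{iθ}) = Σ_{t=0}^{m−1} g(t) e^{−iθt} satisfies Re C(e^{iθ}) − ρ·|C(e^{iθ})|² − ν ≥ 0. Then for every finitely supported u : ℕ → ℝ, the output y(t) = Σ_{k=0}^{min(t,m−1)} g(k) u(t−k) of the FIR convolution satisfies Σ_{t∈ℕ} ( u(t) y(t) − ρ y(t)² − ν u(t)² ) ≥ 0 (all sums having finitely many nonzero terms). -/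
/-!
Let `U` and `Y` be the discrete-time Fourier transforms of the finitely supported input and of
the filter output. The convolution becomes the product `Y = C U`, and Parseval's identity turns
the time-domain supply `∑ (u y - ρ y² - ν u²)` into `(1 / 2π) ∫ (Re C - ρ |C|² - ν) |U|² dθ`,
whose integrand is nonnegative by the frequency-domain hypothesis.
-/

open Finset Complex
open scoped Real ComplexConjugate

-- The frequency response `C(e^{iθ})` of the paper is `dtft m g θ`.
noncomputable def dtft (M : ℕ) (a : ℕ → ℂ) (θ : ℝ) : ℂ :=
  ∑ t ∈ range M, a t * exp (-(I * (θ * t)))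

@[fun_prop]
theorem continuous_dtft (M : ℕ) (a : ℕ → ℂ) : Continuous (dtft M a) := by
  unfold dtft
  fun_prop

theorem dtft_eq_of_le {M N : ℕ} {a : ℕ → ℂ} (ha : ∀ t, N ≤ t → a t = 0) (hNM : N ≤ M) :
    dtft M a = dtft N a := by
  ext θ
  refine (sum_subset (range_subset_range.2 hNM) fun t _ ht => ?_).symm
  rw [ha t (by simpa using ht), zero_mul]

theorem integral_exp_int_mul_I (n : ℤ) :
    ∫ θ in (0 : ℝ)..2 * π, exp (n * I * θ) = if n = 0 then (2 * π : ℂ) else 0 := by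
  split_ifs with hn
  · simp [hn]
  · rw [integral_exp_mul_complex (by simp [hn]), ofReal_zero, mul_zero, exp_zero,
      show (n : ℂ) * I * ↑(2 * π) = n * (2 * π * I) by push_cast; ring, exp_int_mul_two_pi_mul_I,
      sub_self, zero_div]

theorem integral_exp_mul_conj_exp (s t : ℕ) :
    ∫ θ in (0 : ℝ)..2 * π, exp (-(I * (θ * s))) * conj (exp (-(I * (θ * t)))) =
      if s = t then (2 * π : ℂ) else 0 := by
  have h (θ : ℝ) : exp (-(I * (θ * s))) * conj (exp (-(I * (θ * t)))) =
      exp (((t : ℤ) - s : ℤ) * I * θ) := by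
    rw [← exp_conj, ← exp_add]
    congr 1
    simp only [map_neg, map_mul, conj_I, conj_ofReal, conj_natCast]
    push_cast
    ring
  simp_rw [h, integral_exp_int_mul_I, sub_eq_zero, Nat.cast_inj, eq_comm]

theorem integral_dtft_mul_conj (M : ℕ) (a b : ℕ → ℂ) :
    ∫ θ in (0 : ℝ)..2 * π, dtft M a θ * conj (dtft M b θ) =
      2 * π * ∑ t ∈ range M, a t * conj (b t) := by
  have h (θ : ℝ) : dtft M a θ * conj (dtft M b θ) = ∑ s ∈ range M, ∑ t ∈ range M,
      a s * conj (b t) * (exp (-(I * (θ * s))) * conj (exp (-(I * (θ * t))))) := by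
    simp only [dtft, map_sum, sum_mul_sum, map_mul]
    exact sum_congr rfl fun _ _ => sum_congr rfl fun _ _ => by ring
  simp_rw [h]
  rw [intervalIntegral.integral_finsetSum fun s _ => (by fun_prop : Continuous _).intervalIntegrable _ _,
    mul_sum]
  refine sum_congr rfl fun s hs => ?_
  rw [intervalIntegral.integral_finsetSum fun t _ => (by fun_prop : Continuous _).intervalIntegrable _ _]
  simp only [intervalIntegral.integral_const_mul, integral_exp_mul_conj_exp, mul_ite, mul_zero,
    sum_ite_eq, hs, ↓reduceIte]
  ring

theorem integral_re_dtft_mul_conj (M : ℕ) (a b : ℕ → ℝ) :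
    ∫ θ in (0 : ℝ)..2 * π, (dtft M (fun t => a t) θ * conj (dtft M (fun t => b t) θ)).re =
      2 * π * ∑ t ∈ range M, a t * b t := by
  have hint : IntervalIntegrable (fun θ => dtft M (fun t => a t) θ * conj (dtft M (fun t => b t) θ))
      MeasureTheory.volume 0 (2 * π) :=
    (by fun_prop : Continuous _).intervalIntegrable _ _
  have h := intervalIntegral.intervalIntegral_re hint
  simp only [RCLike.re_to_complex] at h
  rw [h, integral_dtft_mul_conj]
  simp [← ofReal_mul, ← ofReal_sum, ← ofReal_ofNat]

theorem sq_norm_eq_re_mul_conj (z : ℂ) : ‖z‖ ^ 2 = (z * conj z).re := by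
  rw [mul_conj, ofReal_re, normSq_eq_norm_sq]

theorem integral_supply_rate (M : ℕ) (u y : ℕ → ℝ) (ρ ν : ℝ) :
    ∫ θ in (0 : ℝ)..2 * π, ((dtft M (fun t => y t) θ * conj (dtft M (fun t => u t) θ)).re -
        ρ * ‖dtft M (fun t => y t) θ‖ ^ 2 - ν * ‖dtft M (fun t => u t) θ‖ ^ 2) =
      2 * π * ∑ t ∈ range M, (u t * y t - ρ * y t ^ 2 - ν * u t ^ 2) := by
  simp_rw [sq_norm_eq_re_mul_conj]
  rw [intervalIntegral.integral_sub, intervalIntegral.integral_sub,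
    intervalIntegral.integral_const_mul, intervalIntegral.integral_const_mul,
    integral_re_dtft_mul_conj, integral_re_dtft_mul_conj, integral_re_dtft_mul_conj]
  · simp only [mul_sum, ← sum_sub_distrib]
    exact sum_congr rfl fun t _ => by ring
  all_goals exact (by fun_prop : Continuous _).intervalIntegrable _ _

theorem re_mul_mul_conj_sub_sq_norm (c z : ℂ) (ρ ν : ℝ) :
    (c * z * conj z).re - ρ * ‖c * z‖ ^ 2 - ν * ‖z‖ ^ 2 =
      (c.re - ρ * ‖c‖ ^ 2 - ν) * ‖z‖ ^ 2 := by
  rw [mul_assoc, mul_conj', ← ofReal_pow, re_mul_ofReal, norm_mul]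
  ring

-- For `m = 0` the truncated subtraction `m - 1 = 0` makes this `g 0 * u t` rather than `0`.
def firFilter {R : Type*} [Semiring R] (m : ℕ) (g u : ℕ → R) (t : ℕ) : R :=
  ∑ k ∈ range (min t (m - 1) + 1), g k * u (t - k)

theorem firFilter_eq_zero {R : Type*} [Semiring R] {m N t : ℕ} {g u : ℕ → R}
    (hu : ∀ t, N ≤ t → u t = 0) (ht : m + N ≤ t) : firFilter m g u t = 0 :=
  sum_eq_zero fun k hk => by
    rw [hu _ (by simp only [mem_range] at hk; omega), mul_zero]

theorem exp_neg_I_mul_natCast_add (θ : ℝ) (k s : ℕ) :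
    exp (-(I * (θ * ↑(k + s)))) = exp (-(I * (θ * k))) * exp (-(I * (θ * s))) := by
  rw [← exp_add]
  push_cast
  ring_nf

theorem dtft_firFilter {m N : ℕ} (hm : 1 ≤ m) {g u : ℕ → ℂ} (hu : ∀ t, N ≤ t → u t = 0)
    (θ : ℝ) : dtft (m + N) (firFilter m g u) θ = dtft m g θ * dtft N u θ := by
  calc dtft (m + N) (firFilter m g u) θ
      = ∑ k ∈ range m, ∑ t ∈ Ico k (m + N), g k * u (t - k) * exp (-(I * (θ * t))) := by
        simp only [dtft, firFilter, sum_mul]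
        refine sum_comm' fun t k => ?_
        simp only [mem_range, mem_Ico]
        omega
    _ = ∑ k ∈ range m, g k * exp (-(I * (θ * k))) * dtft (m + N - k) u θ := by
        refine sum_congr rfl fun k _ => ?_
        rw [sum_Ico_eq_sum_range, dtft, mul_sum]
        refine sum_congr rfl fun s _ => ?_
        rw [Nat.add_sub_cancel_left, exp_neg_I_mul_natCast_add]
        ring
    _ = dtft m g θ * dtft N u θ := by
        rw [dtft, sum_mul]
        refine sum_congr rfl fun k hk => ?_
        rw [dtft_eq_of_le hu (by simp only [mem_range] at hk; omega)]

theorem sum_supply_firFilter_nonneg {m N : ℕ} (hm : 1 ≤ m) {g u : ℕ → ℝ} {ρ ν : ℝ}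
    (hfreq : ∀ θ : ℝ, 0 ≤ (dtft m (fun t => g t) θ).re - ρ * ‖dtft m (fun t => g t) θ‖ ^ 2 - ν)
    (hu : ∀ t, N ≤ t → u t = 0) :
    0 ≤ ∑ t ∈ range (m + N),
      (u t * firFilter m g u t - ρ * firFilter m g u t ^ 2 - ν * u t ^ 2) := by
  have hu' : ∀ t, N ≤ t → (u t : ℂ) = 0 := fun t ht => by rw [hu t ht, ofReal_zero]
  have hY (θ : ℝ) : dtft (m + N) (fun t => ((firFilter m g u t : ℝ) : ℂ)) θ =
      dtft m (fun t => g t) θ * dtft N (fun t => u t) θ := by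
    rw [← dtft_firFilter hm hu']
    congr 1 with t
    simp [firFilter]
  have hint := integral_supply_rate (m + N) u (firFilter m g u) ρ ν
  simp only [hY, dtft_eq_of_le (M := m + N) hu' (by omega), re_mul_mul_conj_sub_sq_norm] at hint
  refine (mul_nonneg_iff_of_pos_left (by positivity : (0 : ℝ) < 2 * π)).mp (hint ▸ ?_)
  exact intervalIntegral.integral_nonneg (by positivity) fun θ _ =>
    mul_nonneg (hfreq θ) (sq_nonneg _)

/-- Parseval-type bridge (passivity): if the Nyquist locus of the FIR filter
satisfies `Re C(e^{iθ}) − ρ|C(e^{iθ})|² − ν ≥ 0` for every `θ`, then the FIR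
convolution satisfies the time-domain dissipation inequality
`∑ (u y − ρ y² − ν u²) ≥ 0` for every finitely supported input. -/
theorem stmt17 (m : ℕ) (hm : 1 ≤ m) (g : ℕ → ℝ) (ρ ν : ℝ)
    (hfreq : ∀ θ : ℝ,
      0 ≤ (∑ t ∈ Finset.range m, (g t : ℂ) * Complex.exp (-(Complex.I * (θ * t)))).re -
        ρ * ‖(∑ t ∈ Finset.range m,
          (g t : ℂ) * Complex.exp (-(Complex.I * (θ * t))))‖ ^ 2 - ν) :
    ∀ (u : ℕ → ℝ), (Function.support u).Finite →
      ∀ y : ℕ → ℝ,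
        (∀ t, y t = ∑ k ∈ Finset.range (min t (m - 1) + 1), g k * u (t - k)) →
        0 ≤ ∑' t : ℕ, (u t * y t - ρ * (y t) ^ 2 - ν * (u t) ^ 2) := by
  intro u hu y hy
  obtain rfl : y = firFilter m g u := funext hy
  obtain ⟨B, hB⟩ := hu.bddAbove
  have hu0 : ∀ t, B + 1 ≤ t → u t = 0 := fun t ht =>
    Function.notMem_support.mp fun h => by have := hB h; omega
  rw [tsum_eq_sum (s := range (m + (B + 1))) fun t ht => by
    replace ht : m + (B + 1) ≤ t := by simpa using ht
    simp [hu0 t (by omega), firFilter_eq_zero hu0 ht]]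
  exact sum_supply_firFilter_nonneg hm hfreq hu0
end

section
/- Let m ≥ 1, let M ≥ 2 be an integer, let h₀ > 0 and 0 < h ≤ 1, and let g : {0,…,m−1} → ℝ satisfy |g(t)| ≤ h₀ hᵗ for all t. Set ε = π h₀ · (Σ_{t=0}^{m−1} hᵗ) · (m−1)/(2M), let α > 0 with r := α/√2 > ε, and define f_r(θ) = Σ_{t=0}^{m−1} g(t) cos(tθ), f_i(θ) = Σ_{t=0}^{m−1} g(t) sin(tθ). Suppose that for every integer m' ∈ {0,…,M}: −r + ε < f_r(m'π/M) < r − ε and −r + ε < f_i(m'π/M) < r − ε. Then for every finitely supported u : ℕ → ℝ, the output y(t) = Σ_{k=0}^{min(t,m−1)} g(k) u(t−k) of the FIR convolution satisfies Σ_{t∈ℕ} y(t)² ≤ α² Σ_{t∈ℕ} u(t)²; that is, the FIR filter has ℓ₂ gain at most α. -/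
open Real Finset

lemma lipCos (a b : ℝ) : |Real.cos a - Real.cos b| ≤ |a - b| := by
  rw [Real.cos_sub_cos]
  calc |(-2) * Real.sin ((a+b)/2) * Real.sin ((a-b)/2)|
      = 2 * |Real.sin ((a+b)/2)| * |Real.sin ((a-b)/2)| := by
        rw [abs_mul, abs_mul]; norm_num
    _ ≤ 2 * 1 * |(a-b)/2| :=
        mul_le_mul (mul_le_mul_of_nonneg_left (Real.abs_sin_le_one _) (by norm_num))
          (Real.abs_sin_le_abs) (abs_nonneg _) (by norm_num)
    _ = |a - b| := by rw [abs_div, abs_two]; ring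

lemma lipSin (a b : ℝ) : |Real.sin a - Real.sin b| ≤ |a - b| := by
  rw [Real.sin_sub_sin]
  calc |2 * Real.sin ((a-b)/2) * Real.cos ((a+b)/2)|
      = 2 * |Real.sin ((a-b)/2)| * |Real.cos ((a+b)/2)| := by
        rw [abs_mul, abs_mul]; norm_num
    _ ≤ 2 * |(a-b)/2| * 1 :=
        mul_le_mul (mul_le_mul_of_nonneg_left Real.abs_sin_le_abs (by norm_num))
          (Real.abs_cos_le_one _) (abs_nonneg _) (by positivity)
    _ = |a - b| := by rw [abs_div, abs_two]; ring

lemma intExp (n : ℤ) :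
    ∫ θ in (0:ℝ)..(2*Real.pi), Complex.exp ((n:ℂ) * θ * Complex.I) =
      if n = 0 then (2*Real.pi : ℂ) else 0 := by
  split_ifs with hn
  · simp [hn]
  · have hc : (n:ℂ) * Complex.I ≠ 0 := by
      simp [Complex.I_ne_zero, hn]
    have h1 : ∀ θ : ℝ, (n:ℂ) * θ * Complex.I = ((n:ℂ) * Complex.I) * θ := by
      intro θ; ring
    simp_rw [h1]
    rw [integral_exp_mul_complex hc]
    have : Complex.exp ((n:ℂ) * Complex.I * (2*Real.pi)) = 1 := by
      rw [show ((n:ℂ) * Complex.I * (2*Real.pi)) = (n:ℂ) * (2*(Real.pi:ℂ) * Complex.I) by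
        ring]
      exact Complex.exp_int_mul_two_pi_mul_I n
    simp [this]

lemma parseval_aux (a : ℕ → ℝ) (L : ℕ) :
    (∫ θ in (0:ℝ)..(2*Real.pi),
      ((∑ s ∈ Finset.range L, (a s : ℂ) * Complex.exp (-(s:ℂ) * θ * Complex.I)) *
        ∑ t ∈ Finset.range L, (starRingEnd ℂ) ((a t : ℂ) * Complex.exp (-(t:ℂ) * θ * Complex.I)))) =
      ((2*Real.pi * ∑ t ∈ Finset.range L, (a t)^2 : ℝ) : ℂ) := by
  have hterm : ∀ (s t : ℕ) (θ : ℝ),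
      ((a s : ℂ) * Complex.exp (-(s:ℂ) * θ * Complex.I)) *
        (starRingEnd ℂ) ((a t : ℂ) * Complex.exp (-(t:ℂ) * θ * Complex.I)) =
      ((a s * a t : ℝ) : ℂ) * Complex.exp (((((t:ℤ) - (s:ℤ)):ℤ):ℂ) * θ * Complex.I) := by
    intro s t θ
    rw [map_mul, ← Complex.exp_conj]
    have h1 : (starRingEnd ℂ) (-(t:ℂ) * θ * Complex.I) = (t:ℂ) * θ * Complex.I := by
      simp [map_mul, Complex.conj_ofReal]
    rw [h1, Complex.conj_ofReal, mul_mul_mul_comm, ← Complex.exp_add]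
    have h2 : -(s:ℂ) * θ * Complex.I + (t:ℂ) * θ * Complex.I
        = (((((t:ℤ) - (s:ℤ)):ℤ)):ℂ) * θ * Complex.I := by push_cast; ring
    rw [h2]; push_cast; ring
  have key : ∀ θ : ℝ,
      ((∑ s ∈ Finset.range L, (a s : ℂ) * Complex.exp (-(s:ℂ) * θ * Complex.I)) *
        ∑ t ∈ Finset.range L, (starRingEnd ℂ) ((a t : ℂ) * Complex.exp (-(t:ℂ) * θ * Complex.I))) =
      ∑ p ∈ Finset.range L ×ˢ Finset.range L,
        ((a p.1 * a p.2 : ℝ) : ℂ) *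
          Complex.exp (((((p.2:ℤ) - (p.1:ℤ)):ℤ):ℂ) * θ * Complex.I) := by
    intro θ
    rw [Finset.sum_mul_sum, ← Finset.sum_product']
    exact Finset.sum_congr rfl fun p _ => hterm p.1 p.2 θ
  simp_rw [key]
  rw [intervalIntegral.integral_finset_sum (fun p _ => by
    apply Continuous.intervalIntegrable; fun_prop)]
  have : ∀ p ∈ Finset.range L ×ˢ Finset.range L,
      (∫ θ in (0:ℝ)..(2*Real.pi),
        ((a p.1 * a p.2 : ℝ) : ℂ) *
          Complex.exp (((((p.2:ℤ) - (p.1:ℤ)):ℤ):ℂ) * θ * Complex.I)) =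
      ((a p.1 * a p.2 : ℝ) : ℂ) *
        (if ((p.2:ℤ) - (p.1:ℤ)) = 0 then (2*Real.pi : ℂ) else 0) := by
    intro p _
    rw [intervalIntegral.integral_const_mul, intExp]
  rw [Finset.sum_congr rfl this, Finset.sum_product]
  have hdiag : ∀ s ∈ Finset.range L,
      (∑ t ∈ Finset.range L, ((a s * a t : ℝ) : ℂ) *
        (if ((t:ℤ) - (s:ℤ)) = 0 then (2*Real.pi : ℂ) else 0)) =
      ((a s * a s : ℝ) : ℂ) * (2*Real.pi : ℂ) := by
    intro s hs
    rw [Finset.sum_eq_single_of_mem s hs]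
    · simp
    · intro t _ hts
      have : ¬ ((t:ℤ) - (s:ℤ) = 0) := by
        simp only [sub_eq_zero]; exact_mod_cast fun hh' => hts (by exact_mod_cast hh')
      simp [this]
  rw [Finset.sum_congr rfl hdiag]
  push_cast
  rw [Finset.mul_sum]
  exact Finset.sum_congr rfl fun s _ => by ring

lemma parseval (a : ℕ → ℝ) (L : ℕ) :
    (∫ θ in (0:ℝ)..(2*Real.pi),
      Complex.normSq (∑ t ∈ Finset.range L, (a t : ℂ) * Complex.exp (-(t:ℂ) * θ * Complex.I))) =
      2*Real.pi * ∑ t ∈ Finset.range L, (a t)^2 := by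
  have hpt : ∀ θ : ℝ,
      ((Complex.normSq (∑ t ∈ Finset.range L, (a t : ℂ) *
          Complex.exp (-(t:ℂ) * θ * Complex.I)) : ℝ) : ℂ) =
      ((∑ s ∈ Finset.range L, (a s : ℂ) * Complex.exp (-(s:ℂ) * θ * Complex.I)) *
        ∑ t ∈ Finset.range L, (starRingEnd ℂ) ((a t : ℂ) * Complex.exp (-(t:ℂ) * θ * Complex.I))) := by
    intro θ
    rw [← map_sum (starRingEnd ℂ), Complex.mul_conj]
  have : ((∫ θ in (0:ℝ)..(2*Real.pi),
      Complex.normSq (∑ t ∈ Finset.range L, (a t : ℂ) *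
        Complex.exp (-(t:ℂ) * θ * Complex.I)) : ℝ) : ℂ) =
      ((2*Real.pi * ∑ t ∈ Finset.range L, (a t)^2 : ℝ) : ℂ) := by
    rw [← intervalIntegral.integral_ofReal]
    simp_rw [hpt]
    exact parseval_aux a L
  exact_mod_cast this

lemma conv_eval (g u : ℕ → ℝ) (m N : ℕ) (hm : 1 ≤ m) (hu : ∀ x, N ≤ x → u x = 0)
    (y : ℕ → ℝ) (hy : ∀ t, y t = ∑ k ∈ Finset.range (min t (m - 1) + 1), g k * u (t - k))
    (θ : ℝ) :
    (∑ s ∈ Finset.range (N + m), (y s : ℂ) * Complex.exp (-(s:ℂ) * θ * Complex.I)) =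
    (∑ k ∈ Finset.range m, (g k : ℂ) * Complex.exp (-(k:ℂ) * θ * Complex.I)) *
    (∑ t ∈ Finset.range N, (u t : ℂ) * Complex.exp (-(t:ℂ) * θ * Complex.I)) := by
  set z : ℂ := Complex.exp (-(θ:ℂ) * Complex.I) with hz
  have hzpow : ∀ t : ℕ, Complex.exp (-(t:ℂ) * θ * Complex.I) = z ^ t := by
    intro t
    rw [hz, ← Complex.exp_nat_mul]
    congr 1; ring
  simp_rw [hzpow]
  set p : Polynomial ℂ := ∑ k ∈ Finset.range m, Polynomial.C ((g k : ℝ) : ℂ) * Polynomial.X ^ k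
    with hp
  set q : Polynomial ℂ := ∑ t ∈ Finset.range N, Polynomial.C ((u t : ℝ) : ℂ) * Polynomial.X ^ t
    with hq
  have hpe : p.eval z = ∑ k ∈ Finset.range m, ((g k : ℝ):ℂ) * z ^ k := by
    rw [hp, Polynomial.eval_finset_sum]; simp
  have hqe : q.eval z = ∑ t ∈ Finset.range N, ((u t : ℝ):ℂ) * z ^ t := by
    rw [hq, Polynomial.eval_finset_sum]; simp
  have hpc : ∀ n, p.coeff n = if n < m then ((g n : ℝ):ℂ) else 0 := by
    intro n
    rw [hp, Polynomial.finset_sum_coeff]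
    simp_rw [Polynomial.coeff_C_mul, Polynomial.coeff_X_pow, mul_ite, mul_one, mul_zero]
    rw [Finset.sum_ite_eq (Finset.range m) n]
    simp [Finset.mem_range]
  have hqc : ∀ n, q.coeff n = if n < N then ((u n : ℝ):ℂ) else 0 := by
    intro n
    rw [hq, Polynomial.finset_sum_coeff]
    simp_rw [Polynomial.coeff_C_mul, Polynomial.coeff_X_pow, mul_ite, mul_one, mul_zero]
    rw [Finset.sum_ite_eq (Finset.range N) n]
    simp [Finset.mem_range]
  have hdeg : (p * q).natDegree < N + m := by
    have hdp : p.natDegree ≤ m - 1 :=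
      Polynomial.natDegree_sum_le_of_forall_le _ _ (fun k hk => by
        refine le_trans (Polynomial.natDegree_C_mul_X_pow_le _ _) ?_
        have := Finset.mem_range.mp hk; omega)
    have hdq : q.natDegree ≤ N :=
      Polynomial.natDegree_sum_le_of_forall_le _ _ (fun k hk => by
        refine le_trans (Polynomial.natDegree_C_mul_X_pow_le _ _) ?_
        have := Finset.mem_range.mp hk; omega)
    have := Polynomial.natDegree_mul_le (p := p) (q := q)
    omega
  have heval : (p * q).eval z = ∑ s ∈ Finset.range (N + m), (p * q).coeff s * z ^ s :=
    Polynomial.eval_eq_sum_range' hdeg z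
  have hcoeff : ∀ s, (p * q).coeff s = ((y s : ℝ) : ℂ) := by
    intro s
    rw [Polynomial.coeff_mul, Finset.Nat.sum_antidiagonal_eq_sum_range_succ_mk]
    simp_rw [hpc, hqc]
    have step1 : ∀ k ∈ Finset.range (s + 1),
        (if k < m then ((g k : ℝ):ℂ) else 0) * (if s - k < N then ((u (s-k) : ℝ):ℂ) else 0)
        = (if k < m then ((g k : ℝ):ℂ) else 0) * ((u (s-k) : ℝ):ℂ) := by
      intro k _
      by_cases hk : s - k < N
      · rw [if_pos hk]
      · rw [if_neg hk, hu _ (le_of_not_gt hk)]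
        simp
    rw [Finset.sum_congr rfl step1]
    rw [hy s]
    push_cast
    rw [← Finset.sum_subset (Finset.range_subset_range.mpr (by omega : min s (m-1) + 1 ≤ s + 1))
      (fun k hk1 hk2 => by
        have h1 := Finset.mem_range.mp hk1
        have h2 : ¬ (k < min s (m-1) + 1) := fun hc => hk2 (Finset.mem_range.mpr hc)
        have : ¬ (k < m) := by omega
        rw [if_neg this, zero_mul])]
    refine Finset.sum_congr rfl fun k hk => ?_
    have := Finset.mem_range.mp hk
    rw [if_pos (by omega : k < m)]
  calc (∑ s ∈ Finset.range (N + m), ((y s : ℝ):ℂ) * z ^ s)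
      = ∑ s ∈ Finset.range (N + m), (p*q).coeff s * z ^ s := by
        refine Finset.sum_congr rfl fun s _ => by rw [hcoeff]
    _ = (p * q).eval z := heval.symm
    _ = p.eval z * q.eval z := by rw [Polynomial.eval_mul]
    _ = _ := by rw [hpe, hqe]

lemma term_re_im (c v : ℝ) :
    ((c:ℂ) * Complex.exp ((v:ℂ) * Complex.I)).re = c * Real.cos v ∧
    ((c:ℂ) * Complex.exp ((v:ℂ) * Complex.I)).im = c * Real.sin v := by
  rw [Complex.exp_mul_I, ← Complex.ofReal_cos, ← Complex.ofReal_sin]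
  constructor <;> simp [Complex.cos_ofReal_re, Complex.sin_ofReal_re]

lemma round_bounds (x : ℝ) (Mr : ℕ) (hx0 : 0 ≤ x) (hxM : x ≤ Mr) :
    0 ≤ round x ∧ round x ≤ Mr := by
  constructor
  · rw [round_eq]
    exact Int.floor_nonneg.mpr (by linarith)
  · rw [round_eq]
    have h1 : ⌊x + 1/2⌋ ≤ ⌊(Mr:ℝ) + 1/2⌋ := Int.floor_le_floor (by linarith)
    have h2 : ⌊(Mr:ℝ) + 1/2⌋ = (Mr:ℤ) := by
      rw [show ((Mr:ℝ)) = ((Mr:ℤ):ℝ) by push_cast; ring, Int.floor_intCast_add]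
      norm_num
    omega

lemma lip_sum (m : ℕ) (hm : 1 ≤ m) (h₀ h : ℝ) (hh₀ : 0 < h₀) (hh : 0 < h)
    (g : ℕ → ℝ) (hg : ∀ t < m, |g t| ≤ h₀ * h ^ t)
    (F : ℝ → ℝ) (hF : ∀ a b : ℝ, |F a - F b| ≤ |a - b|)
    (θ θ' δ : ℝ) (hδ0 : 0 ≤ δ) (hclose : |θ - θ'| ≤ δ) :
    |(∑ t ∈ Finset.range m, g t * F (t * θ)) - ∑ t ∈ Finset.range m, g t * F (t * θ')|
      ≤ h₀ * (∑ t ∈ Finset.range m, h ^ t) * ((m:ℝ) - 1) * δ := by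
  rw [← Finset.sum_sub_distrib]
  calc |∑ t ∈ Finset.range m, (g t * F (t * θ) - g t * F (t * θ'))|
      ≤ ∑ t ∈ Finset.range m, |g t * F (t * θ) - g t * F (t * θ')| :=
        Finset.abs_sum_le_sum_abs _ _
    _ ≤ ∑ t ∈ Finset.range m, (h₀ * h ^ t) * (((m:ℝ) - 1) * δ) := by
        refine Finset.sum_le_sum fun t ht => ?_
        have htm := Finset.mem_range.mp ht
        have htm' : (t:ℝ) ≤ (m:ℝ) - 1 := by
          have : (t:ℝ) + 1 ≤ (m:ℝ) := by exact_mod_cast htm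
          linarith
        rw [← mul_sub, abs_mul]
        have h1 : |F (t * θ) - F (t * θ')| ≤ (t:ℝ) * δ := by
          calc |F (t * θ) - F (t * θ')| ≤ |(t:ℝ) * θ - (t:ℝ) * θ'| := hF _ _
            _ = (t:ℝ) * |θ - θ'| := by
                rw [← mul_sub, abs_mul, Nat.abs_cast]
            _ ≤ (t:ℝ) * δ := by
                exact mul_le_mul_of_nonneg_left hclose (Nat.cast_nonneg t)
        calc |g t| * |F (t * θ) - F (t * θ')| ≤ (h₀ * h ^ t) * ((t:ℝ) * δ) := by
              refine mul_le_mul (hg t htm) h1 (abs_nonneg _) ?_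
              positivity
          _ ≤ (h₀ * h ^ t) * (((m:ℝ) - 1) * δ) := by
              refine mul_le_mul_of_nonneg_left ?_ (by positivity)
              exact mul_le_mul_of_nonneg_right htm' hδ0
    _ = h₀ * (∑ t ∈ Finset.range m, h ^ t) * ((m:ℝ) - 1) * δ := by
        rw [← Finset.sum_mul, ← Finset.mul_sum]
        ring

lemma freq_bound (m M : ℕ) (hm : 1 ≤ m) (hM : 2 ≤ M) (h₀ h : ℝ)
    (hh₀ : 0 < h₀) (hh : 0 < h) (hh1 : h ≤ 1)
    (g : ℕ → ℝ) (hg : ∀ t < m, |g t| ≤ h₀ * h ^ t)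
    (r : ℝ) (hr : 0 ≤ r)
    (hbox : ∀ m' : ℕ, m' ≤ M →
      |∑ t ∈ Finset.range m, g t * Real.cos (t * ((m':ℝ) * Real.pi / M))| ≤
        r - Real.pi * h₀ * (∑ t ∈ Finset.range m, h ^ t) * ((m:ℝ)-1) / (2*M) ∧
      |∑ t ∈ Finset.range m, g t * Real.sin (t * ((m':ℝ) * Real.pi / M))| ≤
        r - Real.pi * h₀ * (∑ t ∈ Finset.range m, h ^ t) * ((m:ℝ)-1) / (2*M))
    (θ : ℝ) (hθ0 : 0 ≤ θ) (hθ2 : θ ≤ 2*Real.pi) :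
    Complex.normSq (∑ t ∈ Finset.range m, (g t : ℂ) * Complex.exp (-(t:ℂ) * θ * Complex.I))
      ≤ 2 * r^2 := by
  have hπ := Real.pi_pos
  have hM0 : (0:ℝ) < M := by exact_mod_cast Nat.lt_of_lt_of_le two_pos hM
  set ε : ℝ := Real.pi * h₀ * (∑ t ∈ Finset.range m, h ^ t) * ((m:ℝ)-1) / (2*M) with hε
  set fr : ℝ → ℝ := fun ψ => ∑ t ∈ Finset.range m, g t * Real.cos (t * ψ) with hfr
  set fi : ℝ → ℝ := fun ψ => ∑ t ∈ Finset.range m, g t * Real.sin (t * ψ) with hfi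
  -- Step 1: normSq = fr² + fi²
  have hns : Complex.normSq (∑ t ∈ Finset.range m, (g t : ℂ)
      * Complex.exp (-(t:ℂ) * θ * Complex.I)) = (fr θ)^2 + (fi θ)^2 := by
    have hterm : ∀ t : ℕ, (g t : ℂ) * Complex.exp (-(t:ℂ) * θ * Complex.I)
        = (g t : ℂ) * Complex.exp (((-(t * θ) : ℝ):ℂ) * Complex.I) := by
      intro t; congr 1; push_cast; ring
    simp_rw [hterm]
    rw [Complex.normSq_apply, Complex.re_sum, Complex.im_sum]
    have h1 : ∀ t ∈ Finset.range m,
        ((g t : ℂ) * Complex.exp (((-(t * θ) : ℝ):ℂ) * Complex.I)).re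
          = g t * Real.cos (t * θ) := by
      intro t _
      rw [(term_re_im (g t) (-(t*θ))).1, Real.cos_neg]
    have h2 : ∀ t ∈ Finset.range m,
        ((g t : ℂ) * Complex.exp (((-(t * θ) : ℝ):ℂ) * Complex.I)).im
          = -(g t * Real.sin (t * θ)) := by
      intro t _
      rw [(term_re_im (g t) (-(t*θ))).2, Real.sin_neg]; ring
    have e1 : fr θ = ∑ t ∈ Finset.range m, g t * Real.cos (t * θ) := rfl
    have e2 : fi θ = ∑ t ∈ Finset.range m, g t * Real.sin (t * θ) := rfl
    rw [Finset.sum_congr rfl h1, Finset.sum_congr rfl h2, Finset.sum_neg_distrib, e1, e2]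
    ring
  rw [hns]
  -- Step 2: bound on [0, π]
  have key : ∀ ψ : ℝ, 0 ≤ ψ → ψ ≤ Real.pi → |fr ψ| ≤ r ∧ |fi ψ| ≤ r := by
    intro ψ hψ0 hψπ
    set x : ℝ := ψ * M / Real.pi with hx
    have hx0 : 0 ≤ x := by positivity
    have hxM : x ≤ M := by
      rw [hx, div_le_iff₀ hπ]
      calc ψ * M ≤ Real.pi * M := by nlinarith
        _ = M * Real.pi := by ring
    obtain ⟨hn0, hnM⟩ := round_bounds x M hx0 hxM
    set m' : ℕ := (round x).toNat with hm'
    have hm'M : m' ≤ M := by omega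
    have hm'r : ((m':ℕ):ℝ) = ((round x : ℤ):ℝ) := by
      rw [hm']; exact_mod_cast congrArg (Int.cast : ℤ → ℝ) (Int.toNat_of_nonneg hn0)
    set ψ' : ℝ := (m':ℝ) * Real.pi / M with hψ'
    have hclose : |ψ - ψ'| ≤ Real.pi / (2*M) := by
      have hψx : ψ = x * Real.pi / M := by
        rw [hx]; field_simp
      have : ψ - ψ' = (x - (round x : ℤ)) * (Real.pi / M) := by
        rw [hψx, hψ', hm'r]; field_simp
      rw [this, abs_mul, abs_of_pos (by positivity : (0:ℝ) < Real.pi / M)]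
      calc |x - (round x : ℤ)| * (Real.pi / M) ≤ (1/2) * (Real.pi / M) := by
            exact mul_le_mul_of_nonneg_right (abs_sub_round x) (by positivity)
        _ = Real.pi / (2*M) := by ring
    have hδε : h₀ * (∑ t ∈ Finset.range m, h ^ t) * ((m:ℝ) - 1) * (Real.pi / (2*M)) = ε := by
      rw [hε]; field_simp
    obtain ⟨hbr, hbi⟩ := hbox m' hm'M
    constructor
    · have hl := lip_sum m hm h₀ h hh₀ hh g hg Real.cos (fun a b => lipCos a b)
        ψ ψ' (Real.pi / (2*M)) (by positivity) hclose
      rw [hδε] at hl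
      calc |fr ψ| ≤ |fr ψ'| + |fr ψ - fr ψ'| := by
            rw [hfr]; simp only []
            calc |fr ψ| = |fr ψ' + (fr ψ - fr ψ')| := by ring_nf
              _ ≤ |fr ψ'| + |fr ψ - fr ψ'| := abs_add_le _ _
        _ ≤ (r - ε) + ε := add_le_add hbr hl
        _ = r := by ring
    · have hl := lip_sum m hm h₀ h hh₀ hh g hg Real.sin (fun a b => lipSin a b)
        ψ ψ' (Real.pi / (2*M)) (by positivity) hclose
      rw [hδε] at hl
      calc |fi ψ| ≤ |fi ψ'| + |fi ψ - fi ψ'| := by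
            calc |fi ψ| = |fi ψ' + (fi ψ - fi ψ')| := by ring_nf
              _ ≤ |fi ψ'| + |fi ψ - fi ψ'| := abs_add_le _ _
        _ ≤ (r - ε) + ε := add_le_add hbi hl
        _ = r := by ring
  -- Step 3: extend to [0, 2π]
  have main : |fr θ| ≤ r ∧ |fi θ| ≤ r := by
    by_cases hcase : θ ≤ Real.pi
    · exact key θ hθ0 hcase
    · push_neg at hcase
      set ψ : ℝ := 2*Real.pi - θ with hψdef
      have h1 : 0 ≤ ψ := by rw [hψdef]; linarith
      have h2 : ψ ≤ Real.pi := by rw [hψdef]; linarith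
      have hfr2 : fr θ = fr ψ := by
        rw [hfr]
        refine Finset.sum_congr rfl fun t _ => ?_
        congr 1
        rw [show (t:ℝ) * θ = (t:ℝ) * (2*Real.pi) - (t:ℝ) * ψ by rw [hψdef]; ring]
        exact Real.cos_nat_mul_two_pi_sub ((t:ℝ)*ψ) t
      have hfi2 : fi θ = -(fi ψ) := by
        rw [hfi, ← Finset.sum_neg_distrib]
        refine Finset.sum_congr rfl fun t _ => ?_
        rw [show (t:ℝ) * θ = (t:ℝ) * (2*Real.pi) - (t:ℝ) * ψ by rw [hψdef]; ring]
        rw [Real.sin_nat_mul_two_pi_sub ((t:ℝ)*ψ) t]; ring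
      obtain ⟨k1, k2⟩ := key ψ h1 h2
      exact ⟨by rw [hfr2]; exact k1, by rw [hfi2, abs_neg]; exact k2⟩
  obtain ⟨m1, m2⟩ := main
  have e1 : (fr θ)^2 ≤ r^2 := by
    rw [← sq_abs]; exact pow_le_pow_left₀ (abs_nonneg _) m1 2
  have e2 : (fi θ)^2 ≤ r^2 := by
    rw [← sq_abs]; exact pow_le_pow_left₀ (abs_nonneg _) m2 2
  linarith

/-- Theorem 3, Case C, end-to-end: the sampled box constraints (with
`r = α/√2 > ε`) and the decay constraint certify the time-domain ℓ₂ gain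
bound `α` for the FIR convolution on finitely supported inputs. -/
theorem stmt19 (m M : ℕ) (hm : 1 ≤ m) (hM : 2 ≤ M) (h₀ h : ℝ)
    (hh₀ : 0 < h₀) (hh : 0 < h) (hh1 : h ≤ 1)
    (g : ℕ → ℝ) (hg : ∀ t < m, |g t| ≤ h₀ * h ^ t)
    (α : ℝ) (hα : 0 < α)
    (hrε : Real.pi * h₀ * (∑ t ∈ Finset.range m, h ^ t) * ((m : ℝ) - 1) / (2 * M) <
      α / Real.sqrt 2)
    (hbox : ∀ m' : ℕ, m' ≤ M →
      (-(α / Real.sqrt 2) +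
          Real.pi * h₀ * (∑ t ∈ Finset.range m, h ^ t) * ((m : ℝ) - 1) / (2 * M) <
        ∑ t ∈ Finset.range m, g t * Real.cos (t * ((m' : ℝ) * Real.pi / M))) ∧
      ((∑ t ∈ Finset.range m, g t * Real.cos (t * ((m' : ℝ) * Real.pi / M))) <
        α / Real.sqrt 2 -
          Real.pi * h₀ * (∑ t ∈ Finset.range m, h ^ t) * ((m : ℝ) - 1) / (2 * M)) ∧
      (-(α / Real.sqrt 2) +
          Real.pi * h₀ * (∑ t ∈ Finset.range m, h ^ t) * ((m : ℝ) - 1) / (2 * M) <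
        ∑ t ∈ Finset.range m, g t * Real.sin (t * ((m' : ℝ) * Real.pi / M))) ∧
      ((∑ t ∈ Finset.range m, g t * Real.sin (t * ((m' : ℝ) * Real.pi / M))) <
        α / Real.sqrt 2 -
          Real.pi * h₀ * (∑ t ∈ Finset.range m, h ^ t) * ((m : ℝ) - 1) / (2 * M))) :
    ∀ (u : ℕ → ℝ), (Function.support u).Finite →
      ∀ y : ℕ → ℝ,
        (∀ t, y t = ∑ k ∈ Finset.range (min t (m - 1) + 1), g k * u (t - k)) →
        ∑' t : ℕ, (y t) ^ 2 ≤ α ^ 2 * ∑' t : ℕ, (u t) ^ 2 := by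
  intro u hu y hy
  have hr0 : 0 ≤ α / Real.sqrt 2 := by positivity
  have hbox' : ∀ m' : ℕ, m' ≤ M →
      |∑ t ∈ Finset.range m, g t * Real.cos (t * ((m':ℝ) * Real.pi / M))| ≤
        α / Real.sqrt 2
          - Real.pi * h₀ * (∑ t ∈ Finset.range m, h ^ t) * ((m:ℝ)-1) / (2*M) ∧
      |∑ t ∈ Finset.range m, g t * Real.sin (t * ((m':ℝ) * Real.pi / M))| ≤
        α / Real.sqrt 2
          - Real.pi * h₀ * (∑ t ∈ Finset.range m, h ^ t) * ((m:ℝ)-1) / (2*M) := by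
    intro m' hm'
    obtain ⟨b1, b2, b3, b4⟩ := hbox m' hm'
    exact ⟨le_of_lt (abs_lt.mpr ⟨by linarith, b2⟩), le_of_lt (abs_lt.mpr ⟨by linarith, b4⟩)⟩
  obtain ⟨N, hN⟩ : ∃ N : ℕ, ∀ x, N ≤ x → u x = 0 := by
    refine ⟨hu.toFinset.sup id + 1, fun x hx => ?_⟩
    by_contra hx0
    have hxs : x ∈ hu.toFinset := by
      simpa [Set.Finite.mem_toFinset, Function.mem_support] using hx0
    have := Finset.le_sup (f := id) hxs
    simp only [id_eq] at this
    omega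
  have yzero : ∀ t, N + m ≤ t → y t = 0 := by
    intro t ht
    rw [hy t]
    apply Finset.sum_eq_zero
    intro k hk
    have hk' := Finset.mem_range.mp hk
    have : N ≤ t - k := by omega
    rw [hN _ this, mul_zero]
  have hyt : ∑' t : ℕ, (y t)^2 = ∑ t ∈ Finset.range (N+m), (y t)^2 :=
    tsum_eq_sum (fun t ht => by
      rw [yzero t (by simpa [Finset.mem_range, not_lt] using ht)]; ring)
  have hut : ∑' t : ℕ, (u t)^2 = ∑ t ∈ Finset.range N, (u t)^2 :=
    tsum_eq_sum (fun t ht => by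
      rw [hN t (by simpa [Finset.mem_range, not_lt] using ht)]; ring)
  have h2r : 2 * (α / Real.sqrt 2)^2 = α^2 := by
    rw [div_pow, Real.sq_sqrt (by norm_num : (0:ℝ) ≤ 2)]; ring
  have hpt : ∀ θ ∈ Set.Icc (0:ℝ) (2*Real.pi),
      Complex.normSq (∑ t ∈ Finset.range (N+m), (y t : ℂ)
        * Complex.exp (-(t:ℂ) * θ * Complex.I)) ≤
      α^2 * Complex.normSq (∑ t ∈ Finset.range N, (u t : ℂ)
        * Complex.exp (-(t:ℂ) * θ * Complex.I)) := by
    intro θ hθ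
    rw [conv_eval g u m N hm hN y hy θ, Complex.normSq_mul]
    refine mul_le_mul_of_nonneg_right ?_ (Complex.normSq_nonneg _)
    have hfb := freq_bound m M hm hM h₀ h hh₀ hh hh1 g hg (α / Real.sqrt 2) hr0 hbox'
      θ hθ.1 hθ.2
    linarith [hfb, h2r]
  have int1 : IntervalIntegrable (fun θ : ℝ =>
      Complex.normSq (∑ t ∈ Finset.range (N+m), (y t : ℂ)
        * Complex.exp (-(t:ℂ) * θ * Complex.I))) MeasureTheory.volume 0 (2*Real.pi) := by
    apply Continuous.intervalIntegrable
    exact Complex.continuous_normSq.comp (by fun_prop)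
  have int2 : IntervalIntegrable (fun θ : ℝ =>
      α^2 * Complex.normSq (∑ t ∈ Finset.range N, (u t : ℂ)
        * Complex.exp (-(t:ℂ) * θ * Complex.I))) MeasureTheory.volume 0 (2*Real.pi) := by
    apply Continuous.intervalIntegrable
    exact continuous_const.mul (Complex.continuous_normSq.comp (by fun_prop))
  have hmono := intervalIntegral.integral_mono_on
    (by positivity : (0:ℝ) ≤ 2*Real.pi) int1 int2 hpt
  rw [parseval y (N+m)] at hmono
  rw [intervalIntegral.integral_const_mul, parseval u N] at hmono
  have h2π : (0:ℝ) < 2*Real.pi := by positivity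
  rw [hyt, hut]
  have : 2*Real.pi * (∑ t ∈ Finset.range (N+m), (y t)^2)
      ≤ 2*Real.pi * (α^2 * ∑ t ∈ Finset.range N, (u t)^2) := by
    calc 2*Real.pi * (∑ t ∈ Finset.range (N+m), (y t)^2)
        ≤ α^2 * (2*Real.pi * ∑ t ∈ Finset.range N, (u t)^2) := hmono
      _ = 2*Real.pi * (α^2 * ∑ t ∈ Finset.range N, (u t)^2) := by ring
  exact le_of_mul_le_mul_left this h2π
end
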